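/- Let K be a field extension of a subfield k', and let (c_n)_{n ∈ ℤ} be a doubly-infinite sequence in K satisfying a linear recurrence c_n = r_1 c_{n−1} + ⋯ + r_M c_{n−M} of minimal order M for all n ∈ ℤ, with r_1, …, r_M ∈ K and r_M ≠ 0. If c_n ∈ k' for every n ≥ n_0, then r_1, …, r_M ∈ k' and c_n ∈ k' for every n ∈ ℤ. -/

import Mathlib

/-!
Shifting the recurrence turns it into the linear system
`C_{n₀} (r_M, …, r_1)ᵀ = (c_{n₀+M}, …, c_{n₀+2M-1})ᵀ`, whose matrix and right-hand side have
entries in `k'`; as `C_{n₀}` is invertible, its unique solution lies in `k'` as well.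
Since `r_M ≠ 0`, the recurrence can then be solved for `c_n` in terms of `c_{n+1}, …, c_{n+M}`,
which carries membership in `k'` down from `n₀` to all of `ℤ`.
-/

open Finset Matrix

theorem Subfield.mem_of_mulVec_eq {K ι : Type*} [Field K] [Fintype ι] [DecidableEq ι]
    (k' : Subfield K) {A : Matrix ι ι K} (hA : A.det ≠ 0) (hAk : ∀ i j, A i j ∈ k')
    {x b : ι → K} (hb : ∀ i, b i ∈ k') (hx : A *ᵥ x = b) (i : ι) : x i ∈ k' := by
  set A' : Matrix ι ι k' := of fun i j => ⟨A i j, hAk i j⟩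
  set b' : ι → k' := fun i => ⟨b i, hb i⟩
  have hA_eq : A = A'.map k'.subtype := rfl
  have hA' : IsUnit A'.det := by
    refine isUnit_iff_ne_zero.2 fun h => hA ?_
    rw [hA_eq, ← RingHom.mapMatrix_apply, ← RingHom.map_det, h, map_zero]
  have hlift : A *ᵥ (k'.subtype ∘ (A'⁻¹ *ᵥ b')) = b := by
    funext j
    rw [hA_eq, ← RingHom.map_mulVec, mulVec_mulVec, mul_nonsing_inv _ hA', one_mulVec]
    rfl
  have hinj : Function.Injective A.mulVec :=
    mulVec_injective_iff_isUnit.2 ((isUnit_iff_isUnit_det A).2 (isUnit_iff_ne_zero.2 hA))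
  rw [hinj (hx.trans hlift.symm)]
  exact SetLike.coe_mem _

def hankel {R : Type*} (c : ℤ → R) (M : ℕ) (n : ℤ) : Matrix (Fin M) (Fin M) R :=
  of fun i j => c (n + i + j)

theorem hankel_mulVec_of_recurrence {R : Type*} [CommSemiring R] {M : ℕ} {r : ℕ → R} {c : ℤ → R}
    (hrec : ∀ n : ℤ, c n = ∑ i ∈ range M, r (i + 1) * c (n - (i + 1))) (n : ℤ) :
    hankel c M n *ᵥ (fun i => r (M - i)) = fun j : Fin M => c (n + M + j) := by
  funext j
  rw [hrec, ← sum_range_reflect, mulVec, dotProduct, ← Fin.sum_univ_eq_sum_range]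
  refine Fintype.sum_congr _ _ fun i => ?_
  have hi := i.isLt
  rw [show M - 1 - (i : ℕ) + 1 = M - i by omega, mul_comm, hankel, of_apply]
  congr 2
  omega

theorem last_coeff_mul_eq_of_recurrence {R : Type*} [CommRing R] {M : ℕ} (hM : 0 < M) {r : ℕ → R}
    {c : ℤ → R} (hrec : ∀ n : ℤ, c n = ∑ i ∈ range M, r (i + 1) * c (n - (i + 1))) (n : ℤ) :
    r M * c n = c (n + M) - ∑ i ∈ range (M - 1), r (i + 1) * c (n + M - (i + 1)) := by
  obtain ⟨m, rfl⟩ : ∃ m, M = m + 1 := ⟨M - 1, by omega⟩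
  rw [hrec (n + ↑(m + 1)), sum_range_succ]
  push_cast
  ring_nf

theorem Subfield.mem_of_recurrence_of_forall_ge {K : Type*} [Field K] (k' : Subfield K)
    {M : ℕ} (hM : 0 < M) {r : ℕ → K} (hrM : r M ≠ 0) (hr : ∀ i ∈ Icc 1 M, r i ∈ k') {c : ℤ → K}
    (hrec : ∀ n : ℤ, c n = ∑ i ∈ range M, r (i + 1) * c (n - (i + 1)))
    {n₀ : ℤ} (hc : ∀ n : ℤ, n₀ ≤ n → c n ∈ k') (n : ℤ) : c n ∈ k' := by
  suffices ∀ m ≤ n₀, ∀ n, m ≤ n → c n ∈ k' from this _ (min_le_right n n₀) n (min_le_left _ _)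
  intro m hm
  induction m, hm using Int.leInductionDown with
  | base => exact hc
  | pred m _ ih =>
    intro n hn
    rcases hn.eq_or_lt with rfl | hn
    · rw [← inv_mul_cancel_left₀ hrM (c (m - 1)), last_coeff_mul_eq_of_recurrence hM hrec]
      refine mul_mem (inv_mem (hr M (mem_Icc.2 ⟨hM, le_rfl⟩))) (sub_mem (ih _ (by omega)) ?_)
      refine sum_mem fun i hi => mul_mem (hr _ ?_) (ih _ ?_) <;> simp only [mem_range, mem_Icc] at hi ⊢ <;> omega
    · exact ih n (by omega)

theorem recurrence_coeffs_in_subfield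
    (K : Type*) [Field K] (k' : Subfield K)
    (M : ℕ) (hM : 0 < M) (r : ℕ → K) (hrM : r M ≠ 0)
    (c : ℤ → K)
    (hrec : ∀ n : ℤ, c n = ∑ i ∈ Finset.range M, r (i + 1) * c (n - (i + 1)))
    (hmin : ∀ n : ℤ, (Matrix.of fun i j : Fin M => c (n + i + j)).det ≠ 0)
    (n₀ : ℤ) (hc : ∀ n : ℤ, n₀ ≤ n → c n ∈ k') :
    (∀ i ∈ Finset.Icc 1 M, r i ∈ k') ∧ ∀ n : ℤ, c n ∈ k' := by
  have hr : ∀ i ∈ Icc 1 M, r i ∈ k' := by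
    intro i hi
    obtain ⟨hi₁, hiM⟩ := mem_Icc.1 hi
    have hmem := k'.mem_of_mulVec_eq (hmin n₀) (fun i j => hc _ (by omega))
      (fun j => hc _ (by omega)) (hankel_mulVec_of_recurrence hrec n₀) ⟨M - i, by omega⟩
    rwa [Nat.sub_sub_self hiM] at hmem
  exact ⟨hr, k'.mem_of_recurrence_of_forall_ge hM hrM hr hrec hc⟩
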